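/- arXiv:2102.06270 — 11 statements merged into one kernel-verified Lean document; each statement's English description precedes it below -/
import Mathlib

section
/- If φ: G → H is a group homomorphism and S ⊆ G is a totally symmetric set of size n, then φ(S) is a totally symmetric set in H of size n or of size 1. -/
/-- A totally symmetric set in a group `G`: a finite set of pairwise commuting
elements such that every permutation of the set is realized by conjugation. -/
def IsTotallySymmetric {G : Type*} [Group G] (S : Finset G) : Prop :=
  (∀ x ∈ S, ∀ y ∈ S, x * y = y * x) ∧
  ∀ σ : Equiv.Perm S, ∃ g : G, ∀ x : S, g * ↑x * g⁻¹ = ↑(σ x)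

lemma exists_perm_pair {α : Type*} [DecidableEq α] {x y a b : α} (hxy : x ≠ y) (hab : a ≠ b) :
    ∃ σ : Equiv.Perm α, σ x = a ∧ σ y = b := by
  refine ⟨(Equiv.swap x a).trans (Equiv.swap ((Equiv.swap x a) y) b), ?_, ?_⟩
  · simp only [Equiv.trans_apply, Equiv.swap_apply_left]
    apply Equiv.swap_apply_of_ne_of_ne
    · intro h
      exact hxy ((Equiv.swap x a).injective (by rw [← h, Equiv.swap_apply_left]))
    · exact hab
  · simp only [Equiv.trans_apply, Equiv.swap_apply_left]

theorem stmt_0 {G H : Type*} [Group G] [Group H] [DecidableEq H]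
    (φ : G →* H) (S : Finset G) (n : ℕ) (hS : IsTotallySymmetric S)
    (hcard : S.card = n) :
    IsTotallySymmetric (S.image φ) ∧
      ((S.image φ).card = n ∨ (S.image φ).card = 1) := by
  classical
  by_cases hconst : ∀ x ∈ S, ∀ y ∈ S, φ x = φ y
  · -- image is a subsingleton
    have himg : ∀ x ∈ S.image φ, ∀ y ∈ S.image φ, x = y := by
      intro x hx y hy
      obtain ⟨a, ha, rfl⟩ := Finset.mem_image.1 hx
      obtain ⟨b, hb, rfl⟩ := Finset.mem_image.1 hy
      exact hconst a ha b hb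
    refine ⟨⟨fun x hx y hy => by rw [himg x hx y hy], fun σ => ⟨1, fun x => ?_⟩⟩, ?_⟩
    · simp only [one_mul, inv_one, mul_one]
      exact himg _ x.2 _ (σ x).2
    · rcases S.eq_empty_or_nonempty with rfl | ⟨s, hs⟩
      · left; simp at hcard ⊢; omega
      · right
        rw [Finset.card_eq_one]
        refine ⟨φ s, Finset.ext fun z => ?_⟩
        simp only [Finset.mem_singleton]
        constructor
        · intro hz; exact himg z hz (φ s) (Finset.mem_image_of_mem φ hs)
        · rintro rfl; exact Finset.mem_image_of_mem φ hs
  · push_neg at hconst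
    obtain ⟨x, hx, y, hy, hxyne⟩ := hconst
    -- φ is injective on S
    have hinj : ∀ u ∈ S, ∀ v ∈ S, φ u = φ v → u = v := by
      intro u hu v hv huv
      by_contra hne
      have hsub : (⟨u, hu⟩ : {z // z ∈ S}) ≠ ⟨v, hv⟩ := fun h => hne (congrArg Subtype.val h)
      have hxyS : (⟨x, hx⟩ : {z // z ∈ S}) ≠ ⟨y, hy⟩ := fun h => hxyne (by
        have := congrArg Subtype.val h; simp only at this; rw [this])
      obtain ⟨σ, hσu, hσv⟩ := exists_perm_pair hsub hxyS
      obtain ⟨g, hg⟩ := hS.2 σ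
      have h1 : g * u * g⁻¹ = x := by have := hg ⟨u, hu⟩; rwa [hσu] at this
      have h2 : g * v * g⁻¹ = y := by have := hg ⟨v, hv⟩; rwa [hσv] at this
      apply hxyne
      rw [← h1, ← h2]
      simp only [map_mul, map_inv, huv]
    have hinjOn : Set.InjOn φ S := fun u hu v hv => hinj u hu v hv
    refine ⟨⟨?_, ?_⟩, Or.inl ?_⟩
    · intro a ha b hb
      obtain ⟨a', ha', rfl⟩ := Finset.mem_image.1 ha
      obtain ⟨b', hb', rfl⟩ := Finset.mem_image.1 hb
      rw [← map_mul, ← map_mul, hS.1 a' ha' b' hb']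
    · intro τ
      -- equivalence between S and its image
      have hbij : Function.Bijective
          (fun a : {z // z ∈ S} => (⟨φ a, Finset.mem_image_of_mem φ a.2⟩ :
            {w // w ∈ S.image φ})) := by
        constructor
        · intro a b hab
          exact Subtype.ext (hinj a a.2 b b.2 (congrArg Subtype.val hab))
        · rintro ⟨w, hw⟩
          obtain ⟨a, ha, rfl⟩ := Finset.mem_image.1 hw
          exact ⟨⟨a, ha⟩, rfl⟩
      let e := Equiv.ofBijective _ hbij
      let σ : Equiv.Perm {z // z ∈ S} := e.trans (τ.trans e.symm)
      obtain ⟨g, hg⟩ := hS.2 σ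
      refine ⟨φ g, fun w => ?_⟩
      have hw : w = e (e.symm w) := (e.apply_symm_apply w).symm
      have key : φ g * φ ↑(e.symm w) * (φ g)⁻¹ = φ ↑(σ (e.symm w)) := by
        rw [← map_inv, ← map_mul, ← map_mul, hg (e.symm w)]
      have hcoe : ((σ (e.symm w) : {z // z ∈ S}) : G) = ((e.symm (τ w) : {z // z ∈ S}) : G) := by
        simp only [σ, Equiv.trans_apply, Equiv.apply_symm_apply]
      have hval : ∀ a : {z // z ∈ S}, (↑(e a) : H) = φ ↑a := fun a => rfl
      calc φ g * ↑w * (φ g)⁻¹ = φ g * ↑(e (e.symm w)) * (φ g)⁻¹ := by rw [← hw]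
        _ = φ g * φ ↑(e.symm w) * (φ g)⁻¹ := by rw [hval]
        _ = φ ↑(σ (e.symm w)) := key
        _ = φ ↑(e.symm (τ w)) := by rw [hcoe]
        _ = ↑(e (e.symm (τ w))) := (hval _).symm
        _ = ↑(τ w) := by rw [e.apply_symm_apply]
    · rw [Finset.card_image_of_injOn hinjOn, hcard]
end

section
/- Every totally symmetric set in the free group F₂ on two generators is a singleton. -/
set_option linter.unusedSectionVars false

open List

namespace TSAux

variable {α : Type*} [DecidableEq α]

/-- inverse of a single letter -/
def inv1 (c : α × Bool) : α × Bool := (c.1, !c.2)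

@[simp] lemma inv1_inv1 (c : α × Bool) : inv1 (inv1 c) = c := by
  simp [inv1]

lemma inv1_injective : Function.Injective (inv1 (α := α)) := by
  intro a b h
  rw [← inv1_inv1 a, h, inv1_inv1]

/-- the no-cancellation relation on adjacent letters -/
def Rr (a b : α × Bool) : Prop := ¬(a.1 = b.1 ∧ a.2 = !b.2)

lemma rr_iff {a b : α × Bool} : Rr a b ↔ b ≠ inv1 a := by
  unfold Rr inv1
  constructor
  · rintro h rfl; exact h ⟨rfl, by simp⟩
  · rintro h ⟨h1, h2⟩
    exact h (Prod.ext h1.symm (by cases b.2 <;> simp_all))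

/-- A word is reduced -/
abbrev Reduced (L : List (α × Bool)) : Prop := List.IsChain Rr L

lemma reduce_eq_self {L : List (α × Bool)} (h : Reduced L) : FreeGroup.reduce L = L := by
  induction L with
  | nil => rfl
  | cons a L ih =>
    rw [FreeGroup.reduce.cons, ih (List.IsChain.tail h)]
    cases L with
    | nil => rfl
    | cons b t =>
      have hab : Rr a b := (List.isChain_cons_cons.mp h).1
      show (if a.1 = b.1 ∧ a.2 = !b.2 then t else a :: b :: t) = a :: b :: t
      rw [if_neg hab]

lemma reduced_reduce (L : List (α × Bool)) : Reduced (FreeGroup.reduce L) := by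
  induction L with
  | nil => exact List.isChain_nil
  | cons a L ih =>
    rw [FreeGroup.reduce.cons]
    cases h : FreeGroup.reduce L with
    | nil => exact List.isChain_singleton a
    | cons b t =>
      rw [h] at ih
      by_cases hc : a.1 = b.1 ∧ a.2 = !b.2
      · show Reduced (if a.1 = b.1 ∧ a.2 = !b.2 then t else a :: b :: t)
        rw [if_pos hc]
        exact List.IsChain.tail ih
      · show Reduced (if a.1 = b.1 ∧ a.2 = !b.2 then t else a :: b :: t)
        rw [if_neg hc]
        exact List.isChain_cons_cons.mpr ⟨hc, ih⟩

lemma toWord_mk_reduced {L : List (α × Bool)} (h : Reduced L) :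
    (FreeGroup.mk L).toWord = L := by
  rw [FreeGroup.toWord_mk, reduce_eq_self h]

lemma reduced_toWord (x : FreeGroup α) : Reduced x.toWord := by
  rw [← FreeGroup.reduce_toWord]; exact reduced_reduce _

lemma invRev_cons (c : α × Bool) (L : List (α × Bool)) :
    FreeGroup.invRev (c :: L) = FreeGroup.invRev L ++ [inv1 c] := by
  simp [FreeGroup.invRev, inv1]

lemma invRev_append (L₁ L₂ : List (α × Bool)) :
    FreeGroup.invRev (L₁ ++ L₂) = FreeGroup.invRev L₂ ++ FreeGroup.invRev L₁ := by
  simp [FreeGroup.invRev]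

lemma invRev_singleton (c : α × Bool) : FreeGroup.invRev [c] = [inv1 c] := by
  simp [FreeGroup.invRev, inv1]

lemma mk_cancel_cons (c : α × Bool) (L : List (α × Bool)) :
    FreeGroup.mk (c :: inv1 c :: L) = FreeGroup.mk L := by
  rw [← FreeGroup.quot_mk_eq_mk, ← FreeGroup.quot_mk_eq_mk]
  exact Quot.sound (@FreeGroup.Red.Step.cons_not α L c.1 c.2)

lemma mk_split (p r : List (α × Bool)) :
    FreeGroup.mk (p ++ r ++ FreeGroup.invRev p) =
      FreeGroup.mk p * FreeGroup.mk r * (FreeGroup.mk p)⁻¹ := by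
  rw [FreeGroup.inv_mk, FreeGroup.mul_mk, FreeGroup.mul_mk]

lemma inv_mk_singleton (c : α × Bool) :
    (FreeGroup.mk [c])⁻¹ = FreeGroup.mk [inv1 c] := by
  rw [FreeGroup.inv_mk, invRev_singleton]

/-- cyclically reduced -/
abbrev Cyc (L : List (α × Bool)) : Prop := Reduced (L ++ L)

lemma Cyc.reduced {L : List (α × Bool)} (h : Cyc L) : Reduced L :=
  List.IsChain.prefix h (List.prefix_append L L)

lemma Cyc.rotate {w r : List (α × Bool)} (h : Cyc w) (hr : w ~r r) : Cyc r := by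
  rcases eq_or_ne w [] with rfl | hw0
  · rw [isRotated_nil_iff'] at hr
    rw [← hr]; exact h
  obtain ⟨n, hn, hrot⟩ := isRotated_iff_mod.mp hr
  have hr' : r = w.drop n ++ w.take n := by
    rw [← hrot, List.rotate_eq_drop_append_take hn]
  set u := w.take n with hu
  set v := w.drop n with hv
  have hw' : w = u ++ v := (List.take_append_drop n w).symm
  -- w ++ w ++ w is reduced
  have h3 : Reduced (w ++ w ++ w) := by
    have hj := (List.isChain_append.mp h).2.2
    exact List.IsChain.append h (Cyc.reduced h) (by
      intro x hx y hy
      rw [List.getLast?_append_of_ne_nil w hw0] at hx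
      exact hj x hx y hy)
  have hinf : (r ++ r) <:+: (w ++ w ++ w) := by
    refine ⟨u, v, ?_⟩
    rw [hr', hw']
    simp [List.append_assoc]
  exact List.IsChain.infix h3 hinf

/-- Key lemma: conjugating a cyclically reduced word gives a reduced word of
the shape `p ++ r ++ p⁻¹` with `r` a rotation. -/
lemma key (w : List (α × Bool)) (hw : Cyc w) (l : List (α × Bool)) :
    ∃ p r : List (α × Bool), w ~r r ∧ Reduced (p ++ r ++ FreeGroup.invRev p) ∧
      FreeGroup.mk l * FreeGroup.mk w * (FreeGroup.mk l)⁻¹ =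
        FreeGroup.mk (p ++ r ++ FreeGroup.invRev p) := by
  rcases eq_or_ne w [] with rfl | hw0
  · refine ⟨[], [], IsRotated.refl _, by simp [Reduced, FreeGroup.invRev], ?_⟩
    show FreeGroup.mk l * FreeGroup.mk [] * (FreeGroup.mk l)⁻¹
        = FreeGroup.mk (([] : List (α × Bool)) ++ [] ++ FreeGroup.invRev [])
    rw [FreeGroup.invRev_empty]
    simp only [List.append_nil]
    rw [← FreeGroup.one_eq_mk]
    group
  induction l with
  | nil =>
    refine ⟨[], w, IsRotated.refl w, ?_, ?_⟩
    · simpa [FreeGroup.invRev] using Cyc.reduced hw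
    · have h1 : FreeGroup.mk ([] : List (α × Bool)) = 1 := FreeGroup.one_eq_mk.symm
      simp [h1, FreeGroup.invRev]
  | cons c l ih =>
    obtain ⟨p, r, hrot, hred, heq⟩ := ih
    have hrcyc : Cyc r := Cyc.rotate hw hrot
    have hrne : r ≠ [] := by
      intro h0
      rw [h0, isRotated_nil_iff] at hrot
      exact hw0 hrot
    have hmkc : FreeGroup.mk (c :: l) = FreeGroup.mk [c] * FreeGroup.mk l := by
      rw [FreeGroup.mul_mk]; rfl
    have hstep : FreeGroup.mk (c :: l) * FreeGroup.mk w * (FreeGroup.mk (c :: l))⁻¹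
        = FreeGroup.mk [c] * (FreeGroup.mk p * FreeGroup.mk r * (FreeGroup.mk p)⁻¹)
            * (FreeGroup.mk [c])⁻¹ := by
      rw [hmkc, ← mk_split, ← heq]
      group
    cases p with
    | cons d p₀ =>
      by_cases hd : d = inv1 c
      · -- front of p cancels with c
        refine ⟨p₀, r, hrot, ?_, ?_⟩
        · exact List.IsChain.infix hred ⟨[d], [inv1 d], by simp [invRev_cons, List.append_assoc]⟩
        · rw [hstep, mk_split]
          have h2 : FreeGroup.mk [c] * FreeGroup.mk (d :: p₀) = FreeGroup.mk p₀ := by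
            rw [FreeGroup.mul_mk, hd]
            exact mk_cancel_cons c p₀
          calc FreeGroup.mk [c] * (FreeGroup.mk (d :: p₀) * FreeGroup.mk r *
                  (FreeGroup.mk (d :: p₀))⁻¹) * (FreeGroup.mk [c])⁻¹
              = (FreeGroup.mk [c] * FreeGroup.mk (d :: p₀)) * FreeGroup.mk r *
                  (FreeGroup.mk [c] * FreeGroup.mk (d :: p₀))⁻¹ := by group
            _ = FreeGroup.mk p₀ * FreeGroup.mk r * (FreeGroup.mk p₀)⁻¹ := by rw [h2]
      · -- no cancellation: prepend c to p
        refine ⟨c :: d :: p₀, r, hrot, ?_, ?_⟩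
        · have hshape : (c :: d :: p₀) ++ r ++ FreeGroup.invRev (c :: d :: p₀)
              = (c :: ((d :: p₀) ++ r ++ FreeGroup.invRev (d :: p₀))) ++ [inv1 c] := by
            simp [invRev_cons, List.append_assoc]
          rw [hshape]
          apply List.IsChain.append
          · exact List.isChain_cons_cons.mpr ⟨rr_iff.mpr (by simpa using hd), hred⟩
          · exact List.isChain_singleton _
          · intro x hx y hy
            simp only [List.head?_cons, Option.mem_def, Option.some.injEq] at hy
            subst hy
            have hshape2 : c :: ((d :: p₀) ++ r ++ FreeGroup.invRev (d :: p₀))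
                = (c :: d :: (p₀ ++ r ++ FreeGroup.invRev p₀)) ++ [inv1 d] := by
              simp [invRev_cons, List.append_assoc]
            rw [hshape2, List.getLast?_concat] at hx
            simp only [Option.mem_def, Option.some.injEq] at hx
            subst hx
            exact rr_iff.mpr (by simpa using Ne.symm hd)
        · rw [hstep, mk_split]
          have h2 : FreeGroup.mk [c] * FreeGroup.mk (d :: p₀) =
              FreeGroup.mk (c :: d :: p₀) := by
            rw [FreeGroup.mul_mk]; rfl
          calc FreeGroup.mk [c] * (FreeGroup.mk (d :: p₀) * FreeGroup.mk r *
                  (FreeGroup.mk (d :: p₀))⁻¹) * (FreeGroup.mk [c])⁻¹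
              = (FreeGroup.mk [c] * FreeGroup.mk (d :: p₀)) * FreeGroup.mk r *
                  (FreeGroup.mk [c] * FreeGroup.mk (d :: p₀))⁻¹ := by group
            _ = FreeGroup.mk (c :: d :: p₀) * FreeGroup.mk r *
                  (FreeGroup.mk (c :: d :: p₀))⁻¹ := by rw [h2]
    | nil =>
      obtain ⟨a, t, rfl⟩ : ∃ a t, r = a :: t := by
        cases r with
        | nil => exact absurd rfl hrne
        | cons a t => exact ⟨a, t, rfl⟩
      have hsimp : FreeGroup.mk ([] : List (α × Bool)) = 1 := FreeGroup.one_eq_mk.symm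
      by_cases ha : a = inv1 c
      · -- c cancels the first letter of r; rotate
        refine ⟨[], t ++ [a], hrot.trans (isRotated_concat a t).symm, ?_, ?_⟩
        · have : (t ++ [a]) <:+: ((a :: t) ++ (a :: t)) := ⟨[a], t, by simp⟩
          simpa [FreeGroup.invRev] using (List.IsChain.infix hrcyc this : Reduced (t ++ [a]))
        · rw [hstep]
          have hca : FreeGroup.mk [c] = (FreeGroup.mk [a])⁻¹ := by
            rw [inv_mk_singleton, ha, inv1_inv1]
          have hr1 : FreeGroup.mk (a :: t) = FreeGroup.mk [a] * FreeGroup.mk t := by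
            rw [FreeGroup.mul_mk]; rfl
          have hr2 : FreeGroup.mk (([] : List (α × Bool)) ++ (t ++ [a]) ++
              FreeGroup.invRev []) = FreeGroup.mk t * FreeGroup.mk [a] := by
            rw [FreeGroup.mul_mk]
            simp [FreeGroup.invRev]
          rw [hsimp, hca, hr1, hr2]
          group
      · obtain ⟨m, b, hmb⟩ : ∃ m b, a :: t = m ++ [b] :=
          ⟨_, _, (List.dropLast_append_getLast hrne).symm⟩
        by_cases hbc : b = c
        · -- c⁻¹ cancels the last letter of r; rotate the other way
          have hrot2 : (a :: t) ~r (c :: m) := by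
            rw [hmb, hbc]; exact isRotated_concat c m
          refine ⟨[], c :: m, hrot.trans hrot2, ?_, ?_⟩
          · have hinf : (c :: m) <:+: ((a :: t) ++ (a :: t)) := by
              refine ⟨m, [b], ?_⟩
              rw [hmb, hbc]
              simp [List.append_assoc]
            simpa [FreeGroup.invRev] using (List.IsChain.infix hrcyc hinf : Reduced (c :: m))
          · rw [hstep]
            have hr1 : FreeGroup.mk (a :: t) = FreeGroup.mk m * FreeGroup.mk [c] := by
              rw [FreeGroup.mul_mk, hmb, hbc]
            have hr2 : FreeGroup.mk (([] : List (α × Bool)) ++ (c :: m) ++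
                FreeGroup.invRev []) = FreeGroup.mk [c] * FreeGroup.mk m := by
              rw [FreeGroup.mul_mk]
              simp [FreeGroup.invRev]
            rw [hsimp, hr1, hr2]
            group
        · -- no cancellation at all
          refine ⟨[c], a :: t, hrot, ?_, ?_⟩
          · have hshape : [c] ++ (a :: t) ++ FreeGroup.invRev [c]
                = ((c :: m) ++ [b]) ++ [inv1 c] := by
              rw [invRev_singleton, hmb]
              simp [List.append_assoc]
            rw [hshape]
            apply List.IsChain.append
            · rw [List.cons_append, ← hmb]
              exact List.isChain_cons_cons.mpr ⟨rr_iff.mpr (by simpa using ha), (Cyc.reduced hrcyc)⟩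
            · exact List.isChain_singleton _
            · intro x hx y hy
              simp only [List.head?_cons, Option.mem_def, Option.some.injEq] at hy
              subst hy
              rw [List.getLast?_concat] at hx
              simp only [Option.mem_def, Option.some.injEq] at hx
              subst hx
              exact rr_iff.mpr (fun h => hbc (inv1_injective h.symm))
          · rw [hstep, mk_split, hsimp]
            group

/-- a reduced palindrome (fixed by invRev) is trivial -/
lemma reduced_invRev_fixed : ∀ (u : List (α × Bool)), Reduced u →
    FreeGroup.invRev u = u → u = [] := by
  suffices H : ∀ n (u : List (α × Bool)), u.length = n → Reduced u →
      FreeGroup.invRev u = u → u = [] by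
    exact fun u => H u.length u rfl
  intro n
  induction n using Nat.strong_induction_on with
  | _ n ih =>
    intro u hlen hred hfix
    cases u with
    | nil => rfl
    | cons a t =>
      cases t with
      | nil =>
        exfalso
        rw [invRev_singleton] at hfix
        have : inv1 a = a := List.singleton_injective hfix
        simp [inv1, Prod.ext_iff] at this
      | cons a' t' =>
        exfalso
        have htne : (a' :: t') ≠ ([] : List (α × Bool)) := by simp
        obtain ⟨m, b, hmb⟩ : ∃ m b, a' :: t' = m ++ [b] :=
          ⟨_, _, (List.dropLast_append_getLast htne).symm⟩
        rw [hmb] at hfix hred hlen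
        have hfix2 : inv1 b :: (FreeGroup.invRev m ++ [inv1 a]) = a :: (m ++ [b]) := by
          have hcomp : FreeGroup.invRev (a :: (m ++ [b]))
              = inv1 b :: (FreeGroup.invRev m ++ [inv1 a]) := by
            rw [invRev_cons, invRev_append, invRev_singleton]
            simp [List.append_assoc]
          rw [hcomp] at hfix
          simpa using hfix
        have hba : inv1 b = a := (List.cons.injEq _ _ _ _).mp hfix2 |>.1
        have htail : FreeGroup.invRev m ++ [inv1 a] = m ++ [b] :=
          (List.cons.injEq _ _ _ _).mp hfix2 |>.2
        have hmm : FreeGroup.invRev m = m ∧ [inv1 a] = [b] :=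
          List.append_inj htail (by rw [FreeGroup.invRev_length])
        have hmred : Reduced m := List.IsChain.infix hred ⟨[a], [b], by simp⟩
        have hm0 : m = [] := by
          refine ih m.length ?_ m rfl hmred hmm.1
          simp at hlen
          omega
        rw [hm0] at hred
        have hrr : Rr a b := by simpa [Reduced] using hred
        rw [rr_iff] at hrr
        apply hrr
        rw [← hba, inv1_inv1]

/-- every element is conjugate to a cyclically reduced word -/
lemma exists_cyc (z : FreeGroup α) :
    ∃ (h : FreeGroup α) (w : List (α × Bool)), Cyc w ∧ z = h * FreeGroup.mk w * h⁻¹ := by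
  suffices H : ∀ n (z : FreeGroup α), z.toWord.length = n →
      ∃ (h : FreeGroup α) (w : List (α × Bool)), Cyc w ∧ z = h * FreeGroup.mk w * h⁻¹ by
    exact H z.toWord.length z rfl
  intro n
  induction n using Nat.strong_induction_on with
  | _ n ih =>
    intro z hlen
    set L := z.toWord with hL
    have hLred : Reduced L := reduced_toWord z
    have hzL : z = FreeGroup.mk L := (FreeGroup.mk_toWord).symm
    by_cases hC : Cyc L
    · exact ⟨1, L, hC, by simpa using hzL⟩
    have hjunc : ¬ ∀ x ∈ L.getLast?, ∀ y ∈ L.head?, Rr x y := by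
      intro hj
      exact hC (List.isChain_append.mpr ⟨hLred, hLred, hj⟩)
    push_neg at hjunc
    obtain ⟨x, hx, y, hy, hxy⟩ := hjunc
    have hLne : L ≠ [] := by rintro h0; rw [h0] at hy; simp at hy
    obtain ⟨a, t, hL0⟩ : ∃ a t, L = a :: t := by
      cases hc : L with
      | nil => exact absurd hc hLne
      | cons a t => exact ⟨a, t, rfl⟩
    have hya : y = a := by rw [hL0] at hy; exact (by simpa using hy : a = y).symm
    subst hya
    have hxinv : x = inv1 y := by
      unfold Rr at hxy
      push_neg at hxy
      obtain ⟨h1, h2⟩ := hxy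
      exact Prod.ext h1 (by simpa [inv1] using h2)
    cases t with
    | nil =>
      exfalso
      rw [hL0] at hx
      simp only [List.getLast?_singleton, Option.mem_def, Option.some.injEq] at hx
      rw [hxinv] at hx
      simp [inv1, Prod.ext_iff] at hx
    | cons a' t' =>
      obtain ⟨m, b, hmb⟩ : ∃ m b, (a' :: t' : List (α × Bool)) = m ++ [b] :=
        ⟨_, _, (List.dropLast_append_getLast (by simp)).symm⟩
      have hL2 : L = (y :: m) ++ [b] := by rw [hL0, hmb]; rfl
      have hbx : b = x := by
        rw [hL2, List.getLast?_concat] at hx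
        simpa using hx
      have hL3 : L = y :: m ++ [inv1 y] := by
        rw [hL2, hbx, hxinv]
      have hmred : Reduced m := by
        have hh : Reduced (y :: m ++ [inv1 y]) := by rw [← hL3]; exact hLred
        exact List.IsChain.infix hh ⟨[y], [inv1 y], by simp⟩
      have hzdecomp : z = FreeGroup.mk [y] * FreeGroup.mk m * (FreeGroup.mk [y])⁻¹ := by
        rw [hzL, hL3, inv_mk_singleton, FreeGroup.mul_mk, FreeGroup.mul_mk]
        rfl
      have hnorm : (FreeGroup.mk m).toWord.length < n := by
        rw [toWord_mk_reduced hmred]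
        have h1 : L.length = n := hlen
        rw [hL3] at h1
        simp at h1
        omega
      obtain ⟨h, w, hcw, heq⟩ := ih _ hnorm (FreeGroup.mk m) rfl
      refine ⟨FreeGroup.mk [y] * h, w, hcw, ?_⟩
      rw [hzdecomp, heq]
      group

/-- In a free group, an element conjugate to its inverse is trivial. -/
theorem conj_inv_eq_one {g z : FreeGroup α} (h : g * z * g⁻¹ = z⁻¹) : z = 1 := by
  obtain ⟨u, w, hcw, hzw⟩ := exists_cyc z
  subst hzw
  have h2 : (u⁻¹ * g * u) * FreeGroup.mk w * (u⁻¹ * g * u)⁻¹ = (FreeGroup.mk w)⁻¹ := by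
    calc (u⁻¹ * g * u) * FreeGroup.mk w * (u⁻¹ * g * u)⁻¹
        = u⁻¹ * (g * (u * FreeGroup.mk w * u⁻¹) * g⁻¹) * u := by group
      _ = u⁻¹ * (u * FreeGroup.mk w * u⁻¹)⁻¹ * u := by rw [h]
      _ = (FreeGroup.mk w)⁻¹ := by group
  set k := u⁻¹ * g * u with hk
  obtain ⟨p, r, hrot, hred, heq⟩ := key w hcw k.toWord
  rw [FreeGroup.mk_toWord] at heq
  rw [h2] at heq
  -- pass to reduced words
  have hE : FreeGroup.invRev w = p ++ r ++ FreeGroup.invRev p := by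
    have h3 := congrArg FreeGroup.toWord heq
    rw [FreeGroup.toWord_inv, toWord_mk_reduced (Cyc.reduced hcw), toWord_mk_reduced hred] at h3
    exact h3
  have hlw : w.length = r.length := (IsRotated.perm hrot).length_eq
  have hp0 : p = [] := by
    have h4 := congrArg List.length hE
    simp [FreeGroup.invRev_length] at h4
    have : p.length = 0 := by omega
    exact List.length_eq_zero_iff.mp this
  rw [hp0] at hE
  simp only [List.nil_append, List.append_nil, FreeGroup.invRev_empty] at hE
  -- so invRev w is a rotation of w
  have hrot2 : w ~r FreeGroup.invRev w := by rw [hE]; exact hrot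
  obtain ⟨nn, hn, hrot3⟩ := isRotated_iff_mod.mp hrot2
  have hsplit : FreeGroup.invRev w = w.drop nn ++ w.take nn := by
    rw [← hrot3, List.rotate_eq_drop_append_take hn]
  set uu := w.take nn with huu
  set vv := w.drop nn with hvv
  have hw' : w = uu ++ vv := (List.take_append_drop nn w).symm
  have hsplit2 : FreeGroup.invRev vv ++ FreeGroup.invRev uu = vv ++ uu := by
    rw [← invRev_append, ← hw', hsplit]
  have hvvuu : FreeGroup.invRev vv = vv ∧ FreeGroup.invRev uu = uu :=
    List.append_inj hsplit2 (by rw [FreeGroup.invRev_length])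
  have hured : Reduced uu := (Cyc.reduced hcw).prefix (by rw [hw']; exact List.prefix_append _ _)
  have hvred : Reduced vv := (Cyc.reduced hcw).suffix (by rw [hw']; exact List.suffix_append _ _)
  have huu0 : uu = [] := reduced_invRev_fixed uu hured hvvuu.2
  have hvv0 : vv = [] := reduced_invRev_fixed vv hvred hvvuu.1
  have hw0 : w = [] := by rw [hw', huu0, hvv0]; rfl
  rw [hw0, ← FreeGroup.one_eq_mk]
  group

end TSAux

theorem stmt_2 (S : Finset (FreeGroup (Fin 2)))
    (hS : IsTotallySymmetric S) (hne : S.Nonempty) : S.card = 1 := by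
  by_contra hcard
  have h1 : 1 < S.card := by
    have := Finset.card_pos.mpr hne
    omega
  obtain ⟨x, hx, y, hy, hxy⟩ := Finset.one_lt_card.mp h1
  obtain ⟨g, hg⟩ := hS.2 (Equiv.swap ⟨x, hx⟩ ⟨y, hy⟩)
  have hgx := hg ⟨x, hx⟩
  have hgy := hg ⟨y, hy⟩
  rw [Equiv.swap_apply_left] at hgx
  rw [Equiv.swap_apply_right] at hgy
  simp only at hgx hgy
  have hkey : g * (x⁻¹ * y) * g⁻¹ = (x⁻¹ * y)⁻¹ := by
    calc g * (x⁻¹ * y) * g⁻¹ = (g * x * g⁻¹)⁻¹ * (g * y * g⁻¹) := by group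
      _ = y⁻¹ * x := by rw [hgx, hgy]
      _ = (x⁻¹ * y)⁻¹ := by group
  have h0 := TSAux.conj_inv_eq_one hkey
  exact hxy (inv_mul_eq_one.mp h0)
end

section
/- For n ≥ 3, every totally symmetric set in the dihedral group D_{2n} of order 2n has size at most 2. -/
open DihedralGroup

private lemma conj_r {n : ℕ} (g : DihedralGroup n) (i : ZMod n) :
    g * r i * g⁻¹ = r i ∨ g * r i * g⁻¹ = r (-i) := by
  cases g with
  | r j =>
    left
    show DihedralGroup.r j * r i * r (-j) = r i
    rw [r_mul_r, r_mul_r]; ring_nf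
  | sr j =>
    right
    show DihedralGroup.sr j * r i * sr j = r (-i)
    rw [sr_mul_r, sr_mul_sr]; ring_nf

private lemma zmod_two_aux {n : ℕ} (hn : n ≠ 0) {x y : ZMod n} (hx : x + x = 0)
    (hy : y + y = 0) (hx0 : x ≠ 0) (hy0 : y ≠ 0) : x = y := by
  haveI : NeZero n := ⟨hn⟩
  have key : ∀ z : ZMod n, z + z = 0 → z ≠ 0 → z.val + z.val = n := by
    intro z hz hz0
    have hv : (z + z).val = 0 := by rw [hz, ZMod.val_zero]
    rw [ZMod.val_add] at hv
    have hd : n ∣ z.val + z.val := Nat.dvd_of_mod_eq_zero hv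
    have hzv : z.val ≠ 0 := fun h => hz0 (by rwa [← ZMod.val_eq_zero])
    have hlt : z.val < n := ZMod.val_lt z
    exact Nat.eq_of_dvd_of_lt_two_mul (by omega) hd (by omega)
  have := key x hx hx0
  have := key y hy hy0
  have : x.val = y.val := by omega
  exact ZMod.val_injective n this

theorem stmt_4 (n : ℕ) (hn : 3 ≤ n) (S : Finset (DihedralGroup n))
    (hS : IsTotallySymmetric S) : S.card ≤ 2 := by
  by_contra hcard
  push_neg at hcard
  -- extract three distinct elements
  obtain ⟨a, ha⟩ := (Finset.card_pos (s := S)).mp (by omega)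
  have h2 : 0 < (S.erase a).card := by rw [Finset.card_erase_of_mem ha]; omega
  obtain ⟨b, hb'⟩ := Finset.card_pos.mp h2
  obtain ⟨hba, hb⟩ := Finset.mem_erase.mp hb'
  have h3 : 0 < ((S.erase a).erase b).card := by
    rw [Finset.card_erase_of_mem hb', Finset.card_erase_of_mem ha]; omega
  obtain ⟨c, hc'⟩ := Finset.card_pos.mp h3
  obtain ⟨hcb, hc''⟩ := Finset.mem_erase.mp hc'
  obtain ⟨hca, hc⟩ := Finset.mem_erase.mp hc''
  -- no element of S can be conjugated across r/sr types: so S is homogeneous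
  have homog : ∀ x ∈ S, ∀ y ∈ S, x ≠ y → ∀ i j : ZMod n, x = r i → y = sr j → False := by
    intro x hx y hy hxy i j hxi hyj
    obtain ⟨g, hg⟩ := hS.2 (Equiv.swap ⟨x, hx⟩ ⟨y, hy⟩)
    have := hg ⟨x, hx⟩
    rw [Equiv.swap_apply_left] at this
    simp only at this
    rcases conj_r g i with h | h <;>
      · rw [hxi] at this; rw [this, hyj] at h; exact absurd h (by simp)
  cases ha' : a with
  | r i =>
    -- then b and c are rotations too
    obtain ⟨j, hb'j⟩ : ∃ j, b = r j := by
      cases hbj : b with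
      | r j => exact ⟨j, rfl⟩
      | sr j => exact absurd (homog a ha b hb (Ne.symm hba) i j ha' hbj) (fun h => h)
    obtain ⟨k, hc'k⟩ : ∃ k, c = r k := by
      cases hck : c with
      | r k => exact ⟨k, rfl⟩
      | sr k => exact absurd (homog a ha c hc (Ne.symm hca) i k ha' hck) (fun h => h)
    -- 3-cycle argument
    obtain ⟨g, hg⟩ := hS.2 ((Equiv.swap ⟨a, ha⟩ ⟨b, hb⟩).trans (Equiv.swap ⟨b, hb⟩ ⟨c, hc⟩))
    have hA := hg ⟨a, ha⟩
    have hC := hg ⟨c, hc⟩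
    have hAB : (⟨a, ha⟩ : S) ≠ ⟨b, hb⟩ := by simp [Ne.symm hba]
    have hCA : (⟨c, hc⟩ : S) ≠ ⟨a, ha⟩ := by simp [hca]
    have hCB : (⟨c, hc⟩ : S) ≠ ⟨b, hb⟩ := by simp [hcb]
    rw [Equiv.trans_apply, Equiv.swap_apply_left, Equiv.swap_apply_left] at hA
    rw [Equiv.trans_apply, Equiv.swap_apply_of_ne_of_ne hCA hCB,
      Equiv.swap_apply_right] at hC
    simp only at hA hC
    -- hA : g * a * g⁻¹ = c, hC : g * c * g⁻¹ = b
    rcases conj_r g i with h | h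
    · rw [ha'] at hA; rw [hA, hc'k] at h
      exact hca (by rw [hc'k, ha', ← h])
    · rw [ha'] at hA; rw [hA, hc'k] at h
      -- h : r k = r (-i)
      have hk : k = -i := by simpa using h
      rcases conj_r g k with h2 | h2
      · rw [hc'k] at hC; rw [hC, hb'j] at h2
        exact hcb (by rw [hb'j, hc'k, ← h2])
      · rw [hc'k] at hC; rw [hC, hb'j] at h2
        have hj : j = -k := by simpa using h2
        rw [hk, neg_neg] at hj
        exact hba (by rw [hb'j, ha', hj])
  | sr i =>
    -- then b and c are reflections
    obtain ⟨j, hb'j⟩ : ∃ j, b = sr j := by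
      cases hbj : b with
      | r j => exact absurd (homog b hb a ha hba j i hbj ha') (fun h => h)
      | sr j => exact ⟨j, rfl⟩
    obtain ⟨k, hc'k⟩ : ∃ k, c = sr k := by
      cases hck : c with
      | r k => exact absurd (homog c hc a ha hca k i hck ha') (fun h => h)
      | sr k => exact ⟨k, rfl⟩
    -- pairwise commuting reflections
    have comm : ∀ u v : ZMod n, sr u ∈ S → sr v ∈ S → (u - v) + (u - v) = 0 := by
      intro u v hu hv
      have := hS.1 _ hu _ hv
      rw [sr_mul_sr, sr_mul_sr] at this
      have : v - u = u - v := by simpa using this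
      linear_combination -this
    have hij : (i - j) + (i - j) = 0 := comm i j (ha' ▸ ha) (hb'j ▸ hb)
    have hik : (i - k) + (i - k) = 0 := comm i k (ha' ▸ ha) (hc'k ▸ hc)
    have hij0 : i - j ≠ 0 := by
      intro h
      exact hba (by rw [hb'j, ha', sub_eq_zero.mp h])
    have hik0 : i - k ≠ 0 := by
      intro h
      exact hca (by rw [hc'k, ha', sub_eq_zero.mp h])
    have := zmod_two_aux (by omega) hij hik hij0 hik0
    have hjk : j = k := by linear_combination -this
    exact hcb (by rw [hc'k, hb'j, hjk])
end

section
/- For n ≠ ±1, every totally symmetric set in the Baumslag–Solitar group BS(1,n) = ⟨a, b | b a b⁻¹ = aⁿ⟩ is a singleton. -/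
/-- Relators of the Baumslag–Solitar group `BS(1,n) = ⟨a, b ∣ b a b⁻¹ = aⁿ⟩`,
with `a = of 0` and `b = of 1`. -/
def BSRel (n : ℤ) : Set (FreeGroup (Fin 2)) :=
  {FreeGroup.of 1 * FreeGroup.of 0 * (FreeGroup.of 1)⁻¹ * (FreeGroup.of 0 ^ n)⁻¹}

namespace BSAux

variable {n : ℤ}

abbrev G (n : ℤ) := PresentedGroup (BSRel n)

def a : G n := PresentedGroup.of 0
def b : G n := PresentedGroup.of 1

lemma rel : (b : G n) * a * b⁻¹ = a ^ n := by
  have h : PresentedGroup.mk (BSRel n)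
      (FreeGroup.of 1 * FreeGroup.of 0 * (FreeGroup.of 1)⁻¹ * (FreeGroup.of 0 ^ n)⁻¹) = 1 := by
    apply (QuotientGroup.eq_one_iff _).2
    exact Subgroup.subset_normalClosure rfl
  simp only [map_mul, map_inv, map_zpow] at h
  have := mul_inv_eq_one.1 h
  exact this

lemma gen_top : Subgroup.closure ({a, b} : Set (G n)) = ⊤ := by
  have h := PresentedGroup.closure_range_of (BSRel n)
  have : Set.range (PresentedGroup.of : Fin 2 → G n) = {a, b} := by
    ext g
    constructor
    · rintro ⟨i, rfl⟩
      fin_cases i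
      · exact Or.inl rfl
      · exact Or.inr rfl
    · rintro (rfl | rfl)
      · exact ⟨0, rfl⟩
      · exact ⟨1, rfl⟩
  rwa [this] at h

lemma conj_zpow (j : ℤ) : (b : G n) * a ^ j * b⁻¹ = a ^ (j * n) := by
  have : (MulAut.conj (b : G n)) (a ^ j) = ((MulAut.conj (b : G n)) a) ^ j := map_zpow _ _ _
  simp only [MulAut.conj_apply] at this
  rw [this, rel, ← zpow_mul, mul_comm]

lemma conj_pow (k : ℕ) (j : ℤ) : (b : G n) ^ k * a ^ j * ((b : G n) ^ k)⁻¹ = a ^ (j * n ^ k) := by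
  induction k generalizing j with
  | zero => simp
  | succ m ih =>
    have : (b : G n) ^ (m + 1) = b * b ^ m := by rw [pow_succ']
    rw [this, mul_inv_rev, ← mul_assoc]
    calc b * b ^ m * a ^ j * (b ^ m)⁻¹ * (b:G n)⁻¹
        = b * (b ^ m * a ^ j * ((b:G n) ^ m)⁻¹) * b⁻¹ := by group
      _ = b * a ^ (j * n ^ m) * (b:G n)⁻¹ := by rw [ih]
      _ = a ^ (j * n ^ m * n) := conj_zpow _
      _ = a ^ (j * n ^ (m + 1)) := by ring_nf


lemma normal_form (g : G n) :
    ∃ (i k : ℕ) (j : ℤ), g = ((b : G n) ^ i)⁻¹ * a ^ j * b ^ k := by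
  have hg : g ∈ Subgroup.closure ({a, b} : Set (G n)) := by rw [gen_top]; trivial
  induction hg using Subgroup.closure_induction_right with
  | one => exact ⟨0, 0, 0, by simp⟩
  | mul_right x hx y hy ih =>
    obtain ⟨i, k, j, rfl⟩ := ih
    rcases hy with rfl | rfl
    · -- multiply by a
      refine ⟨i, k, j + n ^ k, ?_⟩
      have h := conj_pow (n := n) k 1
      calc ((b:G n)^i)⁻¹ * a ^ j * b ^ k * a
          = ((b:G n)^i)⁻¹ * a ^ j * (b ^ k * a ^ (1:ℤ) * ((b:G n) ^ k)⁻¹) * b ^ k := by group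
        _ = ((b:G n)^i)⁻¹ * a ^ j * a ^ ((1:ℤ) * n ^ k) * b ^ k := by rw [h]
        _ = ((b:G n)^i)⁻¹ * (a ^ j * a ^ ((1:ℤ) * n ^ k)) * b ^ k := by group
        _ = ((b:G n)^i)⁻¹ * a ^ (j + n ^ k) * b ^ k := by rw [← zpow_add, one_mul]
    · -- multiply by b
      exact ⟨i, k + 1, j, by rw [pow_succ, ← mul_assoc]⟩
  | mul_inv_cancel x hx y hy ih =>
    obtain ⟨i, k, j, rfl⟩ := ih
    rcases hy with rfl | rfl
    · refine ⟨i, k, j - n ^ k, ?_⟩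
      have h := conj_pow (n := n) k (-1)
      calc ((b:G n)^i)⁻¹ * a ^ j * b ^ k * a⁻¹
          = ((b:G n)^i)⁻¹ * a ^ j * (b ^ k * a ^ (-1:ℤ) * ((b:G n) ^ k)⁻¹) * b ^ k := by group
        _ = ((b:G n)^i)⁻¹ * a ^ j * a ^ ((-1:ℤ) * n ^ k) * b ^ k := by rw [h]
        _ = ((b:G n)^i)⁻¹ * (a ^ j * a ^ ((-1:ℤ) * n ^ k)) * b ^ k := by group
        _ = ((b:G n)^i)⁻¹ * a ^ (j - n ^ k) * b ^ k := by rw [← zpow_add, neg_one_mul, ← sub_eq_add_neg]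
    · cases k with
      | zero =>
        refine ⟨i + 1, 0, j * n, ?_⟩
        calc ((b:G n)^i)⁻¹ * a ^ j * b ^ 0 * b⁻¹
            = ((b:G n)^i)⁻¹ * b⁻¹ * (b * a ^ j * b⁻¹) := by group
          _ = ((b:G n)^i)⁻¹ * b⁻¹ * a ^ (j * n) := by rw [conj_zpow]
          _ = ((b:G n)^(i+1))⁻¹ * a ^ (j * n) * b ^ 0 := by rw [pow_succ, mul_inv_rev]; group
      | succ m =>
        exact ⟨i, m, j, by rw [pow_succ]; group⟩


section Nonzero

variable (hn : (n : ℚ) ≠ 0)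

noncomputable def un (hn : (n : ℚ) ≠ 0) : ℚˣ := Units.mk0 (n : ℚ) hn

noncomputable def φ (hn : (n : ℚ) ≠ 0) : G n →* Equiv.Perm ℚ :=
  PresentedGroup.toGroup
    (f := ![Equiv.addRight (1 : ℚ), MulAction.toPermHom ℚˣ ℚ (un hn)])
    (by
      rintro r rfl
      simp only [map_mul, map_inv, map_zpow, FreeGroup.lift_apply_of]
      ext t
      simp [un, Equiv.Perm.mul_apply, MulAction.toPermHom_apply, Units.smul_def, Units.smul_def,
        mul_add, mul_inv_cancel₀ hn, Equiv.Perm.inv_def, MulAction.toPerm_symm_apply]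
      field_simp
      ring)

lemma φa : φ hn (a : G n) = Equiv.addRight (1 : ℚ) := PresentedGroup.toGroup.of _

lemma φb : φ hn (b : G n) = MulAction.toPermHom ℚˣ ℚ (un hn) := PresentedGroup.toGroup.of _

end Nonzero


lemma abs_zpow' (q : ℚ) (e : ℤ) : |q ^ e| = |q| ^ e := by
  cases e with
  | ofNat m => simpa using abs_pow q m
  | negSucc m => rw [zpow_negSucc, zpow_negSucc, abs_inv, abs_pow]

lemma exp_zero (h1 : n ≠ 1) (h2 : n ≠ -1) (hn : (n : ℚ) ≠ 0) {e : ℤ}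
    (h : (n : ℚ) ^ e = 1) : e = 0 := by
  have habs1 : |(n : ℚ)| ≠ 1 := by
    intro hh
    rcases abs_eq (le_of_lt one_pos) |>.1 hh with h' | h'
    · exact h1 (by exact_mod_cast h')
    · exact h2 (by exact_mod_cast h')
  have habs : |(n : ℚ)| ^ e = |(n : ℚ)| ^ (0 : ℤ) := by
    rw [← abs_zpow', h, zpow_zero, abs_one]
  exact zpow_right_injective₀ (abs_pos.2 hn) habs1 habs

lemma ne_neg_one (h1 : n ≠ 1) (h2 : n ≠ -1) (hn : (n : ℚ) ≠ 0) (m : ℤ) :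
    (n : ℚ) ^ m ≠ -1 := by
  intro h
  have : (n : ℚ) ^ (2 * m) = 1 := by
    rw [mul_comm, zpow_mul, h]; norm_num
  have h0 := exp_zero h1 h2 hn this
  have : m = 0 := by omega
  rw [this, zpow_zero] at h
  norm_num at h

lemma affine (hn : (n : ℚ) ≠ 0) (g : G n) :
    ∃ (e : ℤ) (p : ℚ), ∀ t, φ hn g t = p + (n : ℚ) ^ e * t := by
  have hg : g ∈ Subgroup.closure ({a, b} : Set (G n)) := by rw [gen_top]; trivial
  induction hg using Subgroup.closure_induction with
  | mem x hx =>
    rcases hx with rfl | rfl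
    · exact ⟨0, 1, fun t => by simp [φa]; ring⟩
    · exact ⟨1, 0, fun t => by simp [φb, un, Units.smul_def]⟩
  | one => exact ⟨0, 0, fun t => by simp⟩
  | mul x y _ _ ihx ihy =>
    obtain ⟨e, p, hp⟩ := ihx
    obtain ⟨f, q, hq⟩ := ihy
    refine ⟨e + f, p + (n : ℚ) ^ e * q, fun t => ?_⟩
    rw [map_mul, Equiv.Perm.mul_apply, hq, hp, zpow_add₀ hn]
    ring
  | inv x _ ihx =>
    obtain ⟨e, p, hp⟩ := ihx
    refine ⟨-e, -p * (n : ℚ) ^ (-e), fun t => ?_⟩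
    have h0 : φ hn x (φ hn x⁻¹ t) = t := by
      rw [← Equiv.Perm.mul_apply, ← map_mul, mul_inv_cancel, map_one, Equiv.Perm.one_apply]
    rw [hp] at h0
    have he : (n : ℚ) ^ e ≠ 0 := zpow_ne_zero _ hn
    generalize hXg : φ hn x⁻¹ t = X at h0 ⊢
    have hX : X = (t - p) / (n:ℚ)^e := by rw [eq_div_iff he]; linear_combination h0
    rw [hX, zpow_neg]
    ring

lemma φ_inj (h1 : n ≠ 1) (h2 : n ≠ -1) (hn : (n : ℚ) ≠ 0) :
    Function.Injective (φ (n := n) hn) := by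
  refine (injective_iff_map_eq_one _).2 fun g hg => ?_
  obtain ⟨i, k, j, rfl⟩ := normal_form g
  have happ : ∀ t : ℚ, ((n:ℚ) ^ i)⁻¹ * ((n:ℚ) ^ k * t + j) = t := by
    intro t
    have hg' : (MulAction.toPermHom ℚˣ ℚ) (((un hn)^i)⁻¹) * (Equiv.addRight (1:ℚ)) ^ j *
        (MulAction.toPermHom ℚˣ ℚ) ((un hn)^k) = 1 := by
      rw [map_inv, map_pow, map_pow]
      simpa [map_mul, map_inv, map_pow, map_zpow, φa, φb] using hg
    have h := congrArg (fun (σ : Equiv.Perm ℚ) => σ t) hg'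
    have zpow_addRight : ∀ m : ℤ, (Equiv.addRight (1:ℚ)) ^ m = Equiv.addRight (m • (1:ℚ)) := by
      intro m
      induction m using Int.induction_on with
      | zero => ext s; simp
      | succ m ih => ext s; rw [zpow_add_one, Equiv.Perm.mul_apply, ih]; simp; ring
      | pred m ih => ext s; rw [zpow_sub_one, Equiv.Perm.mul_apply, ih]; simp; ring
    simp only [Equiv.Perm.mul_apply, zpow_addRight, Equiv.coe_addRight,
      Equiv.Perm.one_apply, MulAction.toPermHom_apply, MulAction.toPerm_apply,
      Units.smul_def, Units.val_inv_eq_inv_val, Units.val_pow_eq_pow_val, un,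
      Units.val_mk0, smul_eq_mul, zsmul_eq_mul, mul_one] at h
    exact h
  have hj : (j : ℚ) = 0 := by
    have := happ 0
    have hi : ((n:ℚ) ^ i)⁻¹ ≠ 0 := inv_ne_zero (pow_ne_zero _ hn)
    field_simp at this
    simp at this
    exact_mod_cast this
  have hj' : j = 0 := by exact_mod_cast hj
  have hik : k = i := by
    have := happ 1
    rw [hj] at this
    have hi : ((n:ℚ) ^ i) ≠ 0 := pow_ne_zero _ hn
    have hpow : (n:ℚ) ^ k = (n:ℚ) ^ i := by field_simp at this; linarith
    have : (n:ℚ) ^ (k:ℤ) = (n:ℚ) ^ (i:ℤ) := by push_cast [zpow_natCast]; exact hpow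
    have habs1 : |(n : ℚ)| ≠ 1 := by
      intro hh
      rcases abs_eq (le_of_lt one_pos) |>.1 hh with h' | h'
      · exact h1 (by exact_mod_cast h')
      · exact h2 (by exact_mod_cast h')
    have := zpow_right_injective₀ (abs_pos.2 hn) habs1
      (by rw [← abs_zpow', ← abs_zpow', this] : |(n:ℚ)| ^ (k:ℤ) = |(n:ℚ)| ^ (i:ℤ))
    exact_mod_cast this
  subst hik hj'
  simp


lemma conj_swap_nz (h1 : n ≠ 1) (h2 : n ≠ -1) (hn : (n : ℚ) ≠ 0) (x y g : G n)
    (hxy : g * x * g⁻¹ = y) (hyx : g * y * g⁻¹ = x) : x = y := by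
  obtain ⟨e, p, hp⟩ := affine hn x
  obtain ⟨f, q, hq⟩ := affine hn y
  obtain ⟨m, s, hs⟩ := affine hn g
  obtain ⟨m', s', hs'⟩ := affine hn g⁻¹
  set E : ℚ := (n:ℚ) ^ e with hE
  set F : ℚ := (n:ℚ) ^ f with hF
  set w : ℚ := (n:ℚ) ^ m with hw
  set w' : ℚ := (n:ℚ) ^ m' with hw'
  -- inverse relation
  have hginv : ∀ t : ℚ, s + w * (s' + w' * t) = t := by
    intro t
    have : φ hn g (φ hn g⁻¹ t) = t := by
      rw [← Equiv.Perm.mul_apply, ← map_mul, mul_inv_cancel, map_one, Equiv.Perm.one_apply]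
    rw [hs', hs] at this
    exact this
  have hI : s + w * s' = 0 := by have := hginv 0; linarith [hginv 0]
  have hJ : w * w' = 1 := by have h0 := hginv 0; have h1' := hginv 1; nlinarith [hginv 0, hginv 1]
  -- conjugation relations
  have key1 : ∀ t : ℚ, q + F * t = s + w * (p + E * (s' + w' * t)) := by
    intro t
    have hc : φ hn y t = φ hn g (φ hn x (φ hn g⁻¹ t)) := by
      rw [← hxy]
      simp only [map_mul, map_inv, Equiv.Perm.mul_apply]
    rw [hq, hs, hp, hs'] at hc
    exact hc
  have key2 : ∀ t : ℚ, p + E * t = s + w * (q + F * (s' + w' * t)) := by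
    intro t
    have hc : φ hn x t = φ hn g (φ hn y (φ hn g⁻¹ t)) := by
      rw [← hyx]
      simp only [map_mul, map_inv, Equiv.Perm.mul_apply]
    rw [hp, hs, hq, hs'] at hc
    exact hc
  have hEF : F = E := by
    have k10 := key1 0
    have k11 := key1 1
    have : F = w * E * w' := by linear_combination k11 - k10
    rw [this]
    linear_combination E * hJ
  have hpq : p = q := by
    have k10 := key1 0
    have k20 := key2 0
    rw [hEF] at k10 k20
    have hfac : (p - q) * (w + 1) = 0 := by linear_combination k20 - k10
    have hwne : w + 1 ≠ 0 := by
      intro hc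
      exact ne_neg_one h1 h2 hn m (by rw [← hw]; linarith)
    have := mul_eq_zero.1 hfac
    rcases this with h' | h'
    · linarith
    · exact absurd h' hwne
  apply φ_inj h1 h2 hn
  ext t
  rw [hp, hq, hpq, hEF]

lemma conj_swap (h1 : n ≠ 1) (h2 : n ≠ -1) (x y g : G n)
    (hxy : g * x * g⁻¹ = y) (hyx : g * y * g⁻¹ = x) : x = y := by
  by_cases hn0 : n = 0
  · -- n = 0 : the group is cyclic generated by b, hence abelian
    subst hn0
    have ha1 : (a : G 0) = 1 := by
      have h := rel (n := 0)
      simp only [zpow_zero] at h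
      group at h
      have : (b : G 0) * a = b := by
        have := congrArg (· * b) h
        simpa [mul_assoc] using this
      calc (a : G 0) = b⁻¹ * (b * a) := by group
        _ = b⁻¹ * b := by rw [this]
        _ = 1 := by group
    have hcyc : ∀ z : G 0, ∃ m : ℤ, z = b ^ m := by
      intro z
      have hz : z ∈ Subgroup.closure ({a, b} : Set (G 0)) := by rw [gen_top]; trivial
      induction hz using Subgroup.closure_induction with
      | mem w hw => rcases hw with rfl | rfl
                    · exact ⟨0, by rw [ha1, zpow_zero]⟩
                    · exact ⟨1, (zpow_one _).symm⟩
      | one => exact ⟨0, (zpow_zero _).symm⟩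
      | mul u v _ _ ihu ihv =>
        obtain ⟨mu, rfl⟩ := ihu; obtain ⟨mv, rfl⟩ := ihv
        exact ⟨mu + mv, (zpow_add _ _ _).symm⟩
      | inv u _ ihu =>
        obtain ⟨mu, rfl⟩ := ihu
        exact ⟨-mu, (zpow_neg _ _).symm⟩
    obtain ⟨mx, rfl⟩ := hcyc x
    obtain ⟨mg, rfl⟩ := hcyc g
    rw [← hxy]
    group
  · exact conj_swap_nz h1 h2 (by exact_mod_cast hn0) x y g hxy hyx

end BSAux

theorem stmt_7 (n : ℤ) (h1 : n ≠ 1) (h2 : n ≠ -1)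
    (S : Finset (PresentedGroup (BSRel n)))
    (hS : IsTotallySymmetric S) (hne : S.Nonempty) : S.card = 1 := by
  by_contra hcard
  have hpos : 0 < S.card := Finset.Nonempty.card_pos hne
  have h2le : 1 < S.card := by omega
  obtain ⟨x, hx, y, hy, hxy⟩ := Finset.one_lt_card.1 h2le
  classical
  obtain ⟨g, hg⟩ := hS.2 (Equiv.swap ⟨x, hx⟩ ⟨y, hy⟩)
  have hgx := hg ⟨x, hx⟩
  have hgy := hg ⟨y, hy⟩
  rw [Equiv.swap_apply_left] at hgx
  rw [Equiv.swap_apply_right] at hgy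
  exact hxy (BSAux.conj_swap h1 h2 x y g hgx hgy)
end

section
/- Let G and H be groups and S ⊆ G × H a subset containing elements (x₁,y₁), (x₁,y₂), (x₂,y) with x₁ ≠ x₂ and y₁ ≠ y₂. Then S is not a totally symmetric set of G × H. -/
theorem stmt_9 {G H : Type*} [Group G] [Group H] (S : Finset (G × H))
    (x₁ x₂ : G) (y₁ y₂ y : H) (hx : x₁ ≠ x₂) (hy : y₁ ≠ y₂)
    (h1 : (x₁, y₁) ∈ S) (h2 : (x₁, y₂) ∈ S) (h3 : (x₂, y) ∈ S) :
    ¬ IsTotallySymmetric S := by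
  rintro ⟨-, hperm⟩
  classical
  set a : S := ⟨(x₁, y₁), h1⟩
  set b : S := ⟨(x₁, y₂), h2⟩
  set c : S := ⟨(x₂, y), h3⟩
  have hba : b ≠ a := by
    simp only [a, b, Ne, Subtype.mk.injEq, Prod.mk.injEq]
    exact fun h => hy h.2.symm
  have hbc : b ≠ c := by
    simp only [b, c, Ne, Subtype.mk.injEq, Prod.mk.injEq]
    exact fun h => hx h.1
  obtain ⟨g, hg⟩ := hperm (Equiv.swap a c)
  have ha := hg a
  have hb := hg b
  rw [Equiv.swap_apply_left] at ha
  rw [Equiv.swap_apply_of_ne_of_ne hba hbc] at hb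
  have ha1 : g.1 * x₁ * g.1⁻¹ = x₂ := congrArg Prod.fst ha
  have hb1 : g.1 * x₁ * g.1⁻¹ = x₁ := congrArg Prod.fst hb
  exact hx (hb1 ▸ ha1)
end

section
/- If S = {(x₁,y₁),...,(x_k,y_k)} is a totally symmetric set in G × H, then either all of the first coordinates xᵢ are equal, or they are pairwise distinct. -/
theorem stmt_10 {G H : Type*} [Group G] [Group H] (S : Finset (G × H))
    (hS : IsTotallySymmetric S) :
    (∀ p ∈ S, ∀ q ∈ S, p.1 = q.1) ∨
      (∀ p ∈ S, ∀ q ∈ S, p.1 = q.1 → p = q) := by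
  by_contra hcon
  push_neg at hcon
  classical
  obtain ⟨⟨a, ha, b, hb, hab⟩, p, hp, q, hq, hpq1, hpq⟩ := hcon
  set P : ↥S := ⟨p, hp⟩
  set Q : ↥S := ⟨q, hq⟩
  set A : ↥S := ⟨a, ha⟩
  set B : ↥S := ⟨b, hb⟩
  have hPQ : P ≠ Q := fun h => hpq (congrArg Subtype.val h)
  have hAB : A ≠ B := fun h => hab (congrArg (fun x : ↥S => (x : G × H).1) h)
  set X : ↥S := Equiv.swap P A Q
  have hXA : X ≠ A := by
    intro h
    apply hPQ
    have : Equiv.swap P A P = Equiv.swap P A Q := by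
      rw [Equiv.swap_apply_left]; exact h.symm
    exact ((Equiv.swap P A).injective this).symm ▸ rfl
  set σ : Equiv.Perm ↥S := (Equiv.swap P A).trans (Equiv.swap X B)
  have hσP : σ P = A := by
    simp only [σ, Equiv.trans_apply, Equiv.swap_apply_left]
    exact Equiv.swap_apply_of_ne_of_ne hXA.symm hAB
  have hσQ : σ Q = B := by
    simp only [σ, Equiv.trans_apply]
    exact Equiv.swap_apply_left X B
  obtain ⟨g, hg⟩ := hS.2 σ
  have h1 := hg P
  have h2 := hg Q
  rw [hσP] at h1
  rw [hσQ] at h2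
  apply hab
  have e1 : g.1 * p.1 * g.1⁻¹ = a.1 := congrArg Prod.fst h1
  have e2 : g.1 * q.1 * g.1⁻¹ = b.1 := congrArg Prod.fst h2
  rw [← e1, ← e2, hpq1]
end

section
/- For any groups G and H, the maximal size S(G × H) of a totally symmetric set in the direct product G × H equals max{S(G), S(H)}. -/
/-- The supremum of sizes of totally symmetric sets in `G`. -/
noncomputable def maxTSS (G : Type*) [Group G] : ℕ∞ :=
  ⨆ S : {S : Finset G // IsTotallySymmetric S}, (S.1.card : ℕ∞)

open scoped Classical

lemma map_tss {G K : Type*} [Group G] [Group K] (φ : G →* K) {S : Finset G}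
    (hS : IsTotallySymmetric S) (hinj : Set.InjOn φ S) :
    IsTotallySymmetric (S.image φ) := by
  obtain ⟨hcomm, hperm⟩ := hS
  refine ⟨?_, ?_⟩
  · rintro _ hx _ hy
    rw [Finset.mem_image] at hx hy
    obtain ⟨a, ha, rfl⟩ := hx
    obtain ⟨b, hb, rfl⟩ := hy
    rw [← map_mul, ← map_mul, hcomm a ha b hb]
  · intro σ
    have hmem : ∀ a : S, φ a ∈ S.image φ := fun a => Finset.mem_image_of_mem φ a.2
    set f : S → (S.image φ : Finset K) := fun a => ⟨φ a, hmem a⟩ with hf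
    have hbij : Function.Bijective f := by
      constructor
      · intro a b hab
        exact Subtype.ext (hinj a.2 b.2 (congrArg Subtype.val hab))
      · rintro ⟨y, hy⟩
        rw [Finset.mem_image] at hy
        obtain ⟨a, ha, rfl⟩ := hy
        exact ⟨⟨a, ha⟩, rfl⟩
    set e := Equiv.ofBijective f hbij with he
    have h1 : ∀ z : (S.image φ : Finset K), φ (e.symm z : G) = (z : K) := fun z =>
      congrArg Subtype.val (e.apply_symm_apply z)
    obtain ⟨g, hg⟩ := hperm (e.trans (σ.trans e.symm))
    refine ⟨φ g, fun y => ?_⟩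
    calc φ g * ↑y * (φ g)⁻¹ = φ (g * (e.symm y : G) * g⁻¹) := by
          rw [map_mul, map_mul, map_inv, h1]
      _ = φ ((e.symm (σ y) : S) : G) := by
          rw [hg (e.symm y)]
          simp [Equiv.trans_apply]
      _ = ↑(σ y) := h1 (σ y)

lemma le_maxTSS {G K : Type*} [Group G] [Group K] (φ : G →* K)
    (hφ : Function.Injective φ) : maxTSS G ≤ maxTSS K := by
  refine iSup_le fun ⟨S, hS⟩ => ?_
  have hinj : Set.InjOn φ S := fun a _ b _ h => hφ h
  have hcard : ((S.image φ).card : ℕ∞) = (S.card : ℕ∞) := by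
    rw [Finset.card_image_of_injOn hinj]
  rw [← hcard]
  exact le_iSup (fun T : {T : Finset K // IsTotallySymmetric T} => (T.1.card : ℕ∞))
    ⟨S.image φ, map_tss φ hS hinj⟩

lemma proj_dichotomy {G H : Type*} [Group G] [Group H] {S : Finset (G × H)}
    (hS : IsTotallySymmetric S) :
    Set.InjOn Prod.fst (S : Set (G × H)) ∨ Set.InjOn Prod.snd (S : Set (G × H)) := by
  by_cases h : Set.InjOn Prod.fst (S : Set (G × H))
  · exact Or.inl h
  right
  rw [Set.InjOn] at h
  push_neg at h
  obtain ⟨x, hx, y, hy, h1, hxy⟩ := h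
  rw [Finset.mem_coe] at hx hy
  have hall : ∀ w ∈ S, w.1 = x.1 := by
    intro w hw
    by_cases hwx : w = x
    · rw [hwx]
    by_cases hwy : w = y
    · rw [hwy, ← h1]
    obtain ⟨c, hc⟩ := hS.2 (Equiv.swap (⟨x, hx⟩ : S) ⟨w, hw⟩)
    have hcx := hc ⟨x, hx⟩
    have hcy := hc ⟨y, hy⟩
    rw [Equiv.swap_apply_left] at hcx
    rw [Equiv.swap_apply_of_ne_of_ne
      (by simp only [ne_eq, Subtype.mk.injEq]; exact fun e => hxy e.symm)
      (by simp only [ne_eq, Subtype.mk.injEq]; exact fun e => hwy e.symm)] at hcy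
    have e1 : c.1 * x.1 * c.1⁻¹ = w.1 := congrArg Prod.fst hcx
    have e2 : c.1 * y.1 * c.1⁻¹ = y.1 := congrArg Prod.fst hcy
    rw [← e1, h1]
    exact e2
  intro u hu v hv h2
  rw [Finset.mem_coe] at hu hv
  exact Prod.ext (by rw [hall u hu, hall v hv]) h2

theorem stmt_11 (G H : Type*) [Group G] [Group H] :
    maxTSS (G × H) = max (maxTSS G) (maxTSS H) := by
  apply le_antisymm
  · refine iSup_le fun ⟨S, hS⟩ => ?_
    rcases proj_dichotomy hS with hinj | hinj
    · refine le_trans ?_ (le_max_left _ _)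
      have hcard : ((S.image (MonoidHom.fst G H)).card : ℕ∞) = (S.card : ℕ∞) := by
        exact_mod_cast Finset.card_image_of_injOn (f := MonoidHom.fst G H) hinj
      rw [← hcard]
      exact le_iSup (fun T : {T : Finset G // IsTotallySymmetric T} => (T.1.card : ℕ∞))
        ⟨_, map_tss (MonoidHom.fst G H) hS hinj⟩
    · refine le_trans ?_ (le_max_right _ _)
      have hcard : ((S.image (MonoidHom.snd G H)).card : ℕ∞) = (S.card : ℕ∞) := by
        exact_mod_cast Finset.card_image_of_injOn (f := MonoidHom.snd G H) hinj
      rw [← hcard]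
      exact le_iSup (fun T : {T : Finset H // IsTotallySymmetric T} => (T.1.card : ℕ∞))
        ⟨_, map_tss (MonoidHom.snd G H) hS hinj⟩
  · exact max_le
      (le_maxTSS (MonoidHom.inl G H) (fun a b h => by simpa using congrArg Prod.fst h))
      (le_maxTSS (MonoidHom.inr G H) (fun a b h => by simpa using congrArg Prod.snd h))
end

section
/- If G is a finite group and S ⊆ G is a totally symmetric set, then |S|! divides |G|. -/
theorem stmt_16 {G : Type*} [Group G] [Fintype G] (S : Finset G)
    (hS : IsTotallySymmetric S) : Nat.factorial S.card ∣ Fintype.card G := by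
  classical
  obtain ⟨-, hperm⟩ := hS
  -- The subgroup of elements normalizing S under conjugation
  let H : Subgroup G :=
    { carrier := {g | ∀ x ∈ S, g * x * g⁻¹ ∈ S}
      mul_mem' := by
        intro a b ha hb x hx
        have h := ha (b * x * b⁻¹) (hb x hx)
        simpa [mul_assoc] using h
      one_mem' := by intro x hx; simpa using hx
      inv_mem' := by
        intro a ha x hx
        have hinj : Function.Injective (fun y : S => (⟨a * y * a⁻¹, ha y y.2⟩ : S)) := by
          intro y z h
          have h' := congrArg Subtype.val h
          simp only at h'
          ext
          exact mul_left_cancel (mul_right_cancel h')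
        have hsurj := Finite.surjective_of_injective hinj
        obtain ⟨y, hy⟩ := hsurj ⟨x, hx⟩
        have hy' : a * y * a⁻¹ = x := congrArg Subtype.val hy
        have : a⁻¹ * x * a = y := by
          rw [← hy']; group
        simpa [this] using y.2 }
  have hmemH : ∀ g : H, ∀ x ∈ S, (g : G) * x * (g : G)⁻¹ ∈ S := fun g => g.2
  let φ : H →* Equiv.Perm S :=
    { toFun := fun g =>
        { toFun := fun x => ⟨(g : G) * x * (g : G)⁻¹, hmemH g x x.2⟩
          invFun := fun x => ⟨(g : G)⁻¹ * x * (g : G), by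
            have h := hmemH g⁻¹ x x.2
            simpa using h⟩
          left_inv := fun x => by ext; simp; group
          right_inv := fun x => by ext; simp; group }
      map_one' := by ext x; simp
      map_mul' := fun a b => by ext x; simp [mul_assoc] }
  have hφsurj : Function.Surjective φ := by
    intro σ
    obtain ⟨g, hg⟩ := hperm σ
    have hgH : g ∈ H := by
      intro x hx
      have := hg ⟨x, hx⟩
      rw [this]
      exact (σ ⟨x, hx⟩).2
    refine ⟨⟨g, hgH⟩, ?_⟩
    ext x
    exact hg x
  have h1 : Nat.card (Equiv.Perm S) ∣ Nat.card H :=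
    Subgroup.card_dvd_of_surjective φ hφsurj
  have h2 : Nat.card H ∣ Nat.card G := Subgroup.card_subgroup_dvd_card H
  have h3 : Nat.card (Equiv.Perm S) = Nat.factorial S.card := by
    simp [Nat.card_eq_fintype_card, Fintype.card_perm, Fintype.card_coe]
  rw [← Nat.card_eq_fintype_card, ← h3]
  exact h1.trans h2
end

section
/- If G is a finite group of odd order, then every totally symmetric set in G has exactly one element. -/
theorem stmt_17 {G : Type*} [Group G] [Fintype G] (hodd : Odd (Fintype.card G))
    (S : Finset G) (hS : IsTotallySymmetric S) (hne : S.Nonempty) :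
    S.card = 1 := by
  by_contra h
  have h1 : 1 < S.card := lt_of_le_of_ne (Finset.one_le_card.mpr hne) (Ne.symm h)
  obtain ⟨x, hx, y, hy, hxy⟩ := Finset.one_lt_card.mp h1
  classical
  obtain ⟨g, hg⟩ := hS.2 (Equiv.swap ⟨x, hx⟩ ⟨y, hy⟩)
  have hgx : g * x * g⁻¹ = y := by
    have := hg ⟨x, hx⟩
    rwa [Equiv.swap_apply_left] at this
  have hgy : g * y * g⁻¹ = x := by
    have := hg ⟨y, hy⟩
    rwa [Equiv.swap_apply_right] at this
  have hsq : Commute (g ^ 2) x := by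
    have : g ^ 2 * x * (g ^ 2)⁻¹ = x := by
      rw [pow_two, mul_inv_rev]
      calc g * g * x * (g⁻¹ * g⁻¹) = g * (g * x * g⁻¹) * g⁻¹ := by group
        _ = g * y * g⁻¹ := by rw [hgx]
        _ = x := hgy
    have := mul_inv_eq_iff_eq_mul.mp this
    exact this
  have hordodd : Odd (orderOf g) := hodd.of_dvd_nat (orderOf_dvd_card)
  obtain ⟨k, hk⟩ := hordodd
  have hgpow : (g ^ 2) ^ (k + 1) = g := by
    rw [← pow_mul]
    have : 2 * (k + 1) = orderOf g + 1 := by omega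
    rw [this, pow_succ, pow_orderOf_eq_one, one_mul]
  have hcomm : Commute g x := by
    have := hsq.pow_left (k + 1)
    rwa [hgpow] at this
  apply hxy
  rw [← hgx, hcomm.eq, mul_assoc, mul_inv_cancel, mul_one]
end

section
/- If G is a solvable group, then every totally symmetric set in G has size at most 4. -/
theorem stmt_18 {G : Type*} [Group G] [Group.IsSolvable G] (S : Finset G)
    (hS : IsTotallySymmetric S) : S.card ≤ 4 := by
  by_contra hcard
  push_neg at hcard
  obtain ⟨-, hperm⟩ := hS
  classical
  -- the setwise stabilizer of S under conjugation
  have inv_aux : ∀ g : G, (∀ x ∈ S, g * x * g⁻¹ ∈ S) → ∀ x ∈ S, g⁻¹ * x * g ∈ S := by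
    intro g hg x hx
    have hinj : Set.InjOn (fun y => g * y * g⁻¹) S := by
      intro a _ b _ hab
      simpa using mul_left_cancel (mul_right_cancel hab)
    have hsurj := Finset.surj_on_of_inj_on_of_card_le (fun y (_ : y ∈ S) => g * y * g⁻¹)
      (fun y hy => hg y hy) (fun a b ha hb h => hinj ha hb h) le_rfl
    obtain ⟨y, hy, hxy⟩ := hsurj x hx
    have : g⁻¹ * x * g = y := by
      rw [hxy]; group
    rw [this]; exact hy
  set H : Subgroup G :=
    { carrier := {g | ∀ x ∈ S, g * x * g⁻¹ ∈ S}
      one_mem' := by intro x hx; simpa using hx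
      mul_mem' := by
        intro a b ha hb x hx
        have := ha (b * x * b⁻¹) (hb x hx)
        convert this using 1
        group
      inv_mem' := by
        intro a ha x hx
        have := inv_aux a ha x hx
        convert this using 1
        group } with hH
  have memH : ∀ g : G, g ∈ H ↔ ∀ x ∈ S, g * x * g⁻¹ ∈ S := fun g => Iff.rfl
  -- the homomorphism H →* Perm S
  let f : H →* Equiv.Perm S :=
    { toFun := fun g =>
        { toFun := fun x => ⟨(g : G) * x * (g : G)⁻¹, g.2 x x.2⟩
          invFun := fun x => ⟨(g : G)⁻¹ * x * g, by
            simpa using (H.inv_mem g.2 : (g : G)⁻¹ ∈ H) x x.2⟩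
          left_inv := by intro x; ext; simp; group
          right_inv := by intro x; ext; simp; group }
      map_one' := by ext x; simp
      map_mul' := by intro a b; ext x; simp; group }
  have hsurj : Function.Surjective f := by
    intro σ
    obtain ⟨g, hg⟩ := hperm σ
    have hgH : g ∈ H := by
      intro x hx
      rw [hg ⟨x, hx⟩]
      exact (σ ⟨x, hx⟩).2
    refine ⟨⟨g, hgH⟩, ?_⟩
    ext x
    exact congrArg Subtype.val (by ext; exact hg x) |>.trans rfl
  have : Group.IsSolvable (Equiv.Perm S) := solvable_of_surjective hsurj
  have hbig : 5 ≤ Cardinal.mk S := by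
    rw [Cardinal.mk_coe_finset]
    exact_mod_cast hcard
  exact Equiv.Perm.not_solvable _ hbig this
end

section
/- If G and H are groups such that G contains a totally symmetric set strictly larger than every totally symmetric set of H, then there is no injective group homomorphism from G to H. -/
theorem stmt_19 {G H : Type*} [Group G] [Group H]
    (h : ∃ S : Finset G, IsTotallySymmetric S ∧
      ∀ T : Finset H, IsTotallySymmetric T → T.card < S.card) :
    ∀ f : G →* H, ¬ Function.Injective f := by
  rintro f hf
  classical
  obtain ⟨S, ⟨hcomm, hperm⟩, hmax⟩ := h
  set T : Finset H := S.image f with hT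
  have hcard : T.card = S.card := Finset.card_image_of_injective S hf
  have hTsym : IsTotallySymmetric T := by
    constructor
    · intro x hx y hy
      simp only [hT, Finset.mem_image] at hx hy
      obtain ⟨a, ha, rfl⟩ := hx
      obtain ⟨b, hb, rfl⟩ := hy
      rw [← map_mul, ← map_mul, hcomm a ha b hb]
    · intro σ
      have hbij : Function.Bijective
          (fun x : {x // x ∈ S} => (⟨f x, Finset.mem_image_of_mem f x.2⟩ : {y // y ∈ T})) := by
        constructor
        · intro a b hab
          simp only [Subtype.mk.injEq] at hab
          exact Subtype.ext (hf hab)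
        · rintro ⟨y, hy⟩
          simp only [hT, Finset.mem_image] at hy
          obtain ⟨a, ha, rfl⟩ := hy
          exact ⟨⟨a, ha⟩, rfl⟩
      set e : {x // x ∈ S} ≃ {y // y ∈ T} := Equiv.ofBijective _ hbij with he
      set σ' : Equiv.Perm {x // x ∈ S} := (Equiv.permCongr e).symm σ with hσ'
      obtain ⟨g, hg⟩ := hperm σ'
      refine ⟨f g, ?_⟩
      rintro ⟨y, hy⟩
      have hy' := hy
      simp only [hT, Finset.mem_image] at hy'
      obtain ⟨a, ha, rfl⟩ := hy'
      have hea : e ⟨a, ha⟩ = ⟨f a, hy⟩ := rfl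
      have h1 : σ ⟨f a, hy⟩ = e (σ' ⟨a, ha⟩) := by
        have hσ : σ = Equiv.permCongr e σ' := by rw [hσ', Equiv.apply_symm_apply]
        rw [hσ, ← hea]
        simp only [Equiv.permCongr_apply, Equiv.symm_apply_apply]
      rw [h1]
      have h2 : (↑(e (σ' ⟨a, ha⟩)) : H) = f ↑(σ' ⟨a, ha⟩) := rfl
      rw [h2, ← hg ⟨a, ha⟩]
      simp [map_mul]
  exact absurd (hmax T hTsym) (by omega)
end
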